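/- Let g:[a,b]→ℝ be left-continuous and increasing with g^C p-H-Hölder, and let f:[a,b]→ℝ be g-Lipschitz continuous with constant H. Then |f(a)(g^C(b)−g^C(a)) − ∫_a^b f dg^C| ≤ H² (b−a)^p (g(b)−g(a)). -/

import Mathlib

/-!
Since `g` is increasing, so is its continuous part `g^C`: the jumps of `g` in `[s, t)` add up to
at most `g t - g s`. Hence every Riemann–Stieltjes sum `∑ f(ξᵢ) Δᵢg^C` differs from
`f(a) (g^C(b) - g^C(a))` by at most `sup_ξ |f(a) - f(ξ)| · (g^C(b) - g^C(a))
≤ H (g(b) - g(a)) · H (b - a)^p`. By Cousin's lemma every gauge admits a fine tagged partition,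
so the bound passes to the Kurzweil–Stieltjes integral.
-/

open Set

/-- Right jump of a function: `u(t⁺) - u(t)`. -/
noncomputable def rjump (u : ℝ → ℝ) (t : ℝ) : ℝ := Function.rightLim u t - u t

/-- Cumulative jump part of `u` on `[a, t)`: `u^B(t) = Σ_{s ∈ [a,t)} Δ⁺u(s)`. -/
noncomputable def jumpPart (u : ℝ → ℝ) (a t : ℝ) : ℝ :=
  ∑' s : ℝ, Set.indicator (Set.Ico a t) (fun v => rjump u v) s

/-- Continuous part of `u` (relative to the base point `a`): `u^C = u - u^B`. -/
noncomputable def contPart (u : ℝ → ℝ) (a t : ℝ) : ℝ := u t - jumpPart u a t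

/-- `I` is the Kurzweil–Stieltjes integral `∫_a^b f dg`: for every `ε > 0` there is a
gauge `δ` such that every `δ`-fine tagged partition of `[a,b]` has Riemann–Stieltjes
sum within `ε` of `I`. -/
def IsKSIntegral (f g : ℝ → ℝ) (a b I : ℝ) : Prop :=
  ∀ ε > (0:ℝ), ∃ δ : ℝ → ℝ, (∀ x, 0 < δ x) ∧
    ∀ (n : ℕ) (t ξ : ℕ → ℝ),
      t 0 = a → t n = b →
      (∀ i < n, t i < t (i + 1)) →
      (∀ i < n, t i ≤ ξ i ∧ ξ i ≤ t (i + 1)) →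
      (∀ i < n, ξ i - δ (ξ i) < t i ∧ t (i + 1) < ξ i + δ (ξ i)) →
      |(∑ i ∈ Finset.range n, f (ξ i) * (g (t (i + 1)) - g (t i))) - I| < ε

/-- `f` is `g`-Lipschitz continuous on `[a,b]` with constant `H`. -/
def GLipschitzOn (f g : ℝ → ℝ) (H a b : ℝ) : Prop :=
  ∀ t ∈ Set.Icc a b, ∀ s ∈ Set.Icc a b, |f t - f s| ≤ H * |g t - g s|

/-- `g` is left-continuous at every point of `s`. -/
def LeftContOn (g : ℝ → ℝ) (s : Set ℝ) : Prop :=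
  ∀ t ∈ s, Filter.Tendsto g (nhdsWithin t (Set.Iio t)) (nhds (g t))

open Filter Topology Function

section Jumps

variable {g : ℝ → ℝ} {a b : ℝ}

lemma MonotoneOn.exists_monotone_rightLim_eq (hg : MonotoneOn g (Icc a b)) (hab : a ≤ b) :
    ∃ G : ℝ → ℝ, Monotone G ∧ EqOn G g (Icc a b) ∧
      ∀ u ∈ Ico a b, rightLim g u = rightLim G u := by
  set G := IccExtend hab fun x : Icc a b => g x
  have hGg : EqOn G g (Icc a b) := fun x hx => IccExtend_of_mem hab _ hx
  have hG : Monotone G := (monotoneOn_iff_monotone.1 hg).IccExtend hab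
  refine ⟨G, hG, hGg, fun u hu => ?_⟩
  have hev : G =ᶠ[𝓝[>] u] g := by
    filter_upwards [Ioo_mem_nhdsGT hu.2] with x hx
    exact hGg ⟨hu.1.trans hx.1.le, hx.2.le⟩
  exact rightLim_eq_of_tendsto ((hG.tendsto_rightLim u).congr' hev)

lemma MonotoneOn.le_rightLim (hg : MonotoneOn g (Icc a b)) {u : ℝ} (hu : u ∈ Ico a b) :
    g u ≤ rightLim g u := by
  obtain ⟨G, hG, hGg, hlim⟩ := hg.exists_monotone_rightLim_eq (hu.1.trans hu.2.le)
  rw [hlim u hu, ← hGg (Ico_subset_Icc_self hu)]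
  exact hG.le_rightLim le_rfl

lemma MonotoneOn.rightLim_le (hg : MonotoneOn g (Icc a b)) {u v : ℝ} (hu : a ≤ u)
    (hv : v ∈ Ioc u b) : rightLim g u ≤ g v := by
  obtain ⟨G, hG, hGg, hlim⟩ := hg.exists_monotone_rightLim_eq (hu.trans (hv.1.le.trans hv.2))
  rw [hlim u ⟨hu, hv.1.trans_le hv.2⟩, ← hGg ⟨hu.trans hv.1.le, hv.2⟩]
  exact hG.rightLim_le hv.1

lemma MonotoneOn.rjump_nonneg (hg : MonotoneOn g (Icc a b)) {u : ℝ} (hu : u ∈ Ico a b) :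
    0 ≤ rjump g u :=
  sub_nonneg.2 (hg.le_rightLim hu)

lemma MonotoneOn.sum_rjump_le (hg : MonotoneOn g (Icc a b)) {s t : ℝ} (hs : a ≤ s)
    (hst : s ≤ t) (ht : t ≤ b) {F : Finset ℝ} (hF : ↑F ⊆ Ico s t) :
    ∑ u ∈ F, rjump g u ≤ g t - g s := by
  induction F using Finset.induction_on_max generalizing t with
  | empty => simpa using hg ⟨hs, hst.trans ht⟩ ⟨hs.trans hst, ht⟩ hst
  | insert m F hmax ih =>
    have hm : m ∈ Ico s t := hF (by simp)
    have hFm : ↑F ⊆ Ico s m := fun x hx =>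
      ⟨(hF (Finset.mem_insert_of_mem hx)).1, hmax x hx⟩
    have hjump : rjump g m ≤ g t - g m :=
      sub_le_sub_right (hg.rightLim_le (hs.trans hm.1) ⟨hm.2, ht⟩) _
    rw [Finset.sum_insert fun h => (hmax m h).false]
    linarith [ih hm.1 (hm.2.le.trans ht) hFm]

lemma MonotoneOn.summable_indicator_rjump (hg : MonotoneOn g (Icc a b)) {s t : ℝ}
    (hs : a ≤ s) (hst : s ≤ t) (ht : t ≤ b) :
    Summable ((Ico s t).indicator (rjump g)) ∧
      ∑' u, (Ico s t).indicator (rjump g) u ≤ g t - g s := by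
  classical
  have hnn : 0 ≤ (Ico s t).indicator (rjump g) := fun u =>
    indicator_nonneg (fun u hu => hg.rjump_nonneg ⟨hs.trans hu.1, hu.2.trans_le ht⟩) u
  have hfin : ∀ F : Finset ℝ, ∑ u ∈ F, (Ico s t).indicator (rjump g) u ≤ g t - g s := by
    intro F
    rw [Finset.sum_indicator_eq_sum_filter]
    exact hg.sum_rjump_le hs hst ht fun x hx => (Finset.mem_filter.1 hx).2
  exact ⟨summable_of_sum_le hnn hfin, Real.tsum_le_of_sum_le hnn hfin⟩

/-- Between `s` and `t` the continuous part grows by `g t - g s` minus the jumps in `[s, t)`,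
which sum to at most `g t - g s`. -/
lemma MonotoneOn.monotoneOn_contPart (hg : MonotoneOn g (Icc a b)) :
    MonotoneOn (contPart g a) (Icc a b) := by
  intro s hs t ht hst
  obtain ⟨hsum₁, -⟩ := hg.summable_indicator_rjump le_rfl hs.1 hs.2
  obtain ⟨hsum₂, hle⟩ := hg.summable_indicator_rjump hs.1 hst ht.2
  have hsplit : jumpPart g a t = jumpPart g a s + ∑' u, (Ico s t).indicator (rjump g) u := by
    rw [jumpPart, jumpPart, ← Ico_union_Ico_eq_Ico hs.1 hst,
      indicator_union_of_disjoint Ico_disjoint_Ico_same]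
    exact hsum₁.tsum_add hsum₂
  simp only [contPart, hsplit]
  linarith

end Jumps

structure IsFineTaggedPartition (δ : ℝ → ℝ) (a b : ℝ) (n : ℕ) (t ξ : ℕ → ℝ) : Prop where
  first : t 0 = a
  last : t n = b
  lt_succ : ∀ i < n, t i < t (i + 1)
  tag_mem : ∀ i < n, t i ≤ ξ i ∧ ξ i ≤ t (i + 1)
  fine : ∀ i < n, ξ i - δ (ξ i) < t i ∧ t (i + 1) < ξ i + δ (ξ i)

namespace IsFineTaggedPartition

variable {δ : ℝ → ℝ} {a b : ℝ} {n : ℕ} {t ξ : ℕ → ℝ}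

lemma refl (δ : ℝ → ℝ) (a : ℝ) : IsFineTaggedPartition δ a a 0 (fun _ => a) (fun _ => a) :=
  ⟨rfl, rfl, by simp, by simp, by simp⟩

lemma snoc (hP : IsFineTaggedPartition δ a b n t ξ) {c θ : ℝ} (hbc : b < c) (hbθ : b ≤ θ)
    (hθc : θ ≤ c) (hθb : θ - δ θ < b) (hcθ : c < θ + δ θ) :
    IsFineTaggedPartition δ a c (n + 1) (fun i => if i ≤ n then t i else c)
      (fun i => if i < n then ξ i else θ) := by
  refine ⟨by simp [hP.first], by simp, fun i hi => ?_, fun i hi => ?_, fun i hi => ?_⟩ <;>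
  rcases Nat.lt_succ_iff_lt_or_eq.1 hi with hi | rfl
  all_goals simp only [hi.le, hi, Nat.succ_le_of_lt hi, le_refl, lt_irrefl,
    Nat.not_succ_le_self, if_true, if_false, hP.last]
  exacts [hP.lt_succ i hi, hbc, hP.tag_mem i hi, ⟨hbθ, hθc⟩, hP.fine i hi, ⟨hθb, hcθ⟩]

lemma le_of_le (hP : IsFineTaggedPartition δ a b n t ξ) {i j : ℕ} (hij : i ≤ j) (hj : j ≤ n) :
    t i ≤ t j := by
  induction j, hij using Nat.le_induction with
  | base => exact le_rfl
  | succ j _ ih => exact (ih (by omega)).trans (hP.lt_succ j (by omega)).le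

lemma mem_Icc (hP : IsFineTaggedPartition δ a b n t ξ) {i : ℕ} (hi : i ≤ n) :
    t i ∈ Icc a b :=
  ⟨hP.first ▸ hP.le_of_le (Nat.zero_le i) hi, hP.last ▸ hP.le_of_le hi le_rfl⟩

lemma tag_mem_Icc (hP : IsFineTaggedPartition δ a b n t ξ) {i : ℕ} (hi : i < n) :
    ξ i ∈ Icc a b :=
  ⟨(hP.mem_Icc hi.le).1.trans (hP.tag_mem i hi).1, (hP.tag_mem i hi).2.trans (hP.mem_Icc hi).2⟩

end IsFineTaggedPartition

/-- Cousin's lemma. The supremum `c` of the points up to which a `δ`-fine partition exists is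
reached (extend from a point within `δ c` of `c`, tagged at `c`), and `c < b` would allow a
further extension past `c`. -/
theorem exists_isFineTaggedPartition {δ : ℝ → ℝ} (hδ : ∀ x, 0 < δ x) {a b : ℝ} (hab : a ≤ b) :
    ∃ n t ξ, IsFineTaggedPartition δ a b n t ξ := by
  set S := {x | x ≤ b ∧ ∃ n t ξ, IsFineTaggedPartition δ a x n t ξ}
  have haS : a ∈ S := ⟨hab, 0, _, _, .refl δ a⟩
  have hbdd : BddAbove S := ⟨b, fun x hx => hx.1⟩
  set c := sSup S
  have hcb : c ≤ b := csSup_le ⟨a, haS⟩ fun x hx => hx.1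
  have hcS : c ∈ S := by
    obtain ⟨x, hxS, hxc⟩ := exists_lt_of_lt_csSup ⟨a, haS⟩ (sub_lt_self c (hδ c))
    rcases (le_csSup hbdd hxS).eq_or_lt with hx | hx
    · rwa [hx] at hxS
    · obtain ⟨-, n, t, ξ, hP⟩ := hxS
      exact ⟨hcb, _, _, _, hP.snoc hx hx.le le_rfl hxc (lt_add_of_pos_right c (hδ c))⟩
  rcases hcb.eq_or_lt with hc | hc
  · exact hc ▸ hcS.2
  obtain ⟨-, n, t, ξ, hP⟩ := hcS
  have hcy : c < min b (c + δ c / 2) := lt_min hc (by linarith [hδ c])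
  have hyS : min b (c + δ c / 2) ∈ S := ⟨min_le_left _ _, _, _, _,
    hP.snoc hcy le_rfl hcy.le (sub_lt_self c (hδ c))
      ((min_le_right _ _).trans_lt (by linarith [hδ c]))⟩
  exact absurd (le_csSup hbdd hyS) hcy.not_ge

noncomputable def riemannSum (f φ : ℝ → ℝ) (n : ℕ) (t ξ : ℕ → ℝ) : ℝ :=
  ∑ i ∈ Finset.range n, f (ξ i) * (φ (t (i + 1)) - φ (t i))

lemma IsKSIntegral.abs_sub_le_of_riemannSum {f φ : ℝ → ℝ} {a b I A B : ℝ} (hI : IsKSIntegral f φ a b I)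
    (hab : a ≤ b) (hB : ∀ δ n t ξ, IsFineTaggedPartition δ a b n t ξ →
      |A - riemannSum f φ n t ξ| ≤ B) :
    |A - I| ≤ B := by
  refine le_of_forall_pos_le_add fun ε hε => ?_
  obtain ⟨δ, hδ, hsum⟩ := hI ε hε
  obtain ⟨n, t, ξ, hP⟩ := exists_isFineTaggedPartition hδ hab
  calc |A - I| ≤ |A - riemannSum f φ n t ξ| + |riemannSum f φ n t ξ - I| := abs_sub_le _ _ _
    _ ≤ B + ε := add_le_add (hB δ n t ξ hP)
        (hsum n t ξ hP.first hP.last hP.lt_succ hP.tag_mem hP.fine).le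

lemma abs_mul_sum_sub_sum_mul_le {ι : Type*} (s : Finset ι) {c M : ℝ} {y d : ι → ℝ}
    (hd : ∀ i ∈ s, 0 ≤ d i) (hy : ∀ i ∈ s, |c - y i| ≤ M) :
    |c * ∑ i ∈ s, d i - ∑ i ∈ s, y i * d i| ≤ M * ∑ i ∈ s, d i := by
  rw [Finset.mul_sum, Finset.mul_sum, ← Finset.sum_sub_distrib]
  refine (Finset.abs_sum_le_sum_abs _ _).trans (Finset.sum_le_sum fun i hi => ?_)
  rw [← sub_mul, abs_mul, abs_of_nonneg (hd i hi)]
  exact mul_le_mul_of_nonneg_right (hy i hi) (hd i hi)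

lemma IsFineTaggedPartition.abs_mul_sub_riemannSum_le {δ f φ : ℝ → ℝ} {a b M : ℝ} {n : ℕ}
    {t ξ : ℕ → ℝ} (hP : IsFineTaggedPartition δ a b n t ξ) (hφ : MonotoneOn φ (Icc a b))
    (hf : ∀ x ∈ Icc a b, |f a - f x| ≤ M) :
    |f a * (φ b - φ a) - riemannSum f φ n t ξ| ≤ M * (φ b - φ a) := by
  have htel : ∑ i ∈ Finset.range n, (φ (t (i + 1)) - φ (t i)) = φ b - φ a := by
    rw [Finset.sum_range_sub (fun i => φ (t i)), hP.last, hP.first]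
  rw [← htel]
  refine abs_mul_sum_sub_sum_mul_le _ (fun i hi => ?_) fun i hi => ?_
  · have hi := Finset.mem_range.1 hi
    exact sub_nonneg.2 (hφ (hP.mem_Icc hi.le) (hP.mem_Icc hi) (hP.lt_succ i hi).le)
  · exact hf _ (hP.tag_mem_Icc (Finset.mem_range.1 hi))

theorem onePoint_quadrature_error_gLipschitz_general
    (a b H p : ℝ) (hab : a ≤ b) (hH : 0 < H)
    (g f : ℝ → ℝ)
    (hg : MonotoneOn g (Set.Icc a b))
    (hgC : ∀ x ∈ Set.Icc a b, ∀ y ∈ Set.Icc a b,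
      |contPart g a x - contPart g a y| ≤ H * |x - y| ^ p)
    (hf : GLipschitzOn f g H a b)
    (I : ℝ) (hI : IsKSIntegral f (contPart g a) a b I) :
    |f a * (contPart g a b - contPart g a a) - I| ≤
      H ^ 2 * (b - a) ^ p * (g b - g a) := by
  have ha : a ∈ Icc a b := left_mem_Icc.2 hab
  have hb : b ∈ Icc a b := right_mem_Icc.2 hab
  have hgC_ab : contPart g a b - contPart g a a ≤ H * (b - a) ^ p := by
    simpa [abs_of_nonneg (sub_nonneg.2 hab)] using (le_abs_self _).trans (hgC b hb a ha)
  have hfa : ∀ x ∈ Icc a b, |f a - f x| ≤ H * (g b - g a) := fun x hx => calc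
    |f a - f x| ≤ H * |g a - g x| := hf a ha x hx
    _ = H * (g x - g a) := by rw [abs_sub_comm, abs_of_nonneg (sub_nonneg.2 (hg ha hx hx.1))]
    _ ≤ H * (g b - g a) := by gcongr; exact hg hx hb hx.2
  refine hI.abs_sub_le_of_riemannSum hab fun δ n t ξ hP =>
    (hP.abs_mul_sub_riemannSum_le hg.monotoneOn_contPart hfa).trans ?_
  calc H * (g b - g a) * (contPart g a b - contPart g a a)
      ≤ H * (g b - g a) * (H * (b - a) ^ p) :=
        mul_le_mul_of_nonneg_left hgC_ab (mul_nonneg hH.le (sub_nonneg.2 (hg ha hb hab)))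
    _ = H ^ 2 * (b - a) ^ p * (g b - g a) := by ring

/-- If `g : [a,b] → ℝ` is left-continuous and increasing with `g^C`
`p`-`H`-Hölder, and `f` is `g`-Lipschitz with constant `H`, then
`|f(a)(g^C(b) - g^C(a)) - ∫_a^b f dg^C| ≤ H² (b-a)^p (g(b) - g(a))`. -/
theorem onePoint_quadrature_error_gLipschitz
    (a b H p : ℝ) (hab : a ≤ b) (hH : 0 < H) (hp0 : 0 < p) (hp1 : p ≤ 1)
    (g f : ℝ → ℝ)
    (hg : MonotoneOn g (Set.Icc a b))
    (hglc : LeftContOn g (Set.Ioo a b))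
    (hgC : ∀ x ∈ Set.Icc a b, ∀ y ∈ Set.Icc a b,
      |contPart g a x - contPart g a y| ≤ H * |x - y| ^ p)
    (hf : GLipschitzOn f g H a b)
    (I : ℝ) (hI : IsKSIntegral f (contPart g a) a b I) :
    |f a * (contPart g a b - contPart g a a) - I| ≤
      H ^ 2 * (b - a) ^ p * (g b - g a) :=
  onePoint_quadrature_error_gLipschitz_general a b H p hab hH g f hg hgC hf I hI
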